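/- With the notation below: β = β'_1 ∘ β'_2 ∘ ⋯ ∘ β'_{r−1} ∘ β_{r−1} ∘ β_{r−2} ∘ ⋯ ∘ β_1, and the lengths are additive in this factorization: ℓ(β) = Σ_{j=1}^{r−1} ℓ(β'_j) + Σ_{i=1}^{r−1} ℓ(β_i); explicitly, ℓ(β_i) = ℓ(β'_i) = n_1·n_{i+1} for each i, so ℓ(β) = 2·n_1·(n_2+⋯+n_r). -/
import Mathlib


/-- `compSeq f lo len = f lo ∘ f (lo+1) ∘ ⋯ ∘ f (lo+len-1)` (rightmost applied first). -/
def compSeq (f : ℕ → Equiv.Perm ℕ) (lo len : ℕ) : Equiv.Perm ℕ :=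
  ((List.range' lo len).map f).prod

/-- `compSeqRev f lo len = f (lo+len-1) ∘ ⋯ ∘ f (lo+1) ∘ f lo`. -/
def compSeqRev (f : ℕ → Equiv.Perm ℕ) (lo len : ℕ) : Equiv.Perm ℕ :=
  ((List.range' lo len).map f).reverse.prod

/-- Number of inversions of `σ` on `{1,…,c}`. -/
def inversions (c : ℕ) (σ : Equiv.Perm ℕ) : ℕ :=
  ((Finset.Icc 1 c ×ˢ Finset.Icc 1 c).filter fun q => q.1 < q.2 ∧ σ q.2 < σ q.1).card

/-- The function exchanging order-preservingly the two adjacent blocks `[p, p+u-1]`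
(of length `u`) and `[p+u, p+u+v-1]` (of length `v`), fixing everything else. -/
def blockSwapFun (p u v x : ℕ) : ℕ :=
  if p ≤ x ∧ x < p + u then x + v
  else if p + u ≤ x ∧ x < p + u + v then x - u
  else x

lemma compSeq_zero (f : ℕ → Equiv.Perm ℕ) (lo : ℕ) : compSeq f lo 0 = 1 := rfl

lemma compSeqRev_zero (f : ℕ → Equiv.Perm ℕ) (lo : ℕ) : compSeqRev f lo 0 = 1 := rfl

lemma compSeq_succ (f : ℕ → Equiv.Perm ℕ) (lo len : ℕ) :
    compSeq f lo (len + 1) = f lo * compSeq f (lo + 1) len := by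
  unfold compSeq
  rw [List.range'_succ]
  simp

lemma compSeqRev_succ (f : ℕ → Equiv.Perm ℕ) (lo len : ℕ) :
    compSeqRev f lo (len + 1) = f (lo + len) * compSeqRev f lo len := by
  unfold compSeqRev
  rw [List.range'_1_concat]
  simp

lemma inversions_blockSwap (c p u v : ℕ) (σ : Equiv.Perm ℕ)
    (hσ : ∀ x, σ x = blockSwapFun p u v x) (hp : 1 ≤ p) (hc : p + u + v ≤ c + 1) :
    inversions c σ = u * v := by
  unfold inversions
  have hset : ((Finset.Icc 1 c ×ˢ Finset.Icc 1 c).filter fun q => q.1 < q.2 ∧ σ q.2 < σ q.1)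
      = Finset.Icc p (p + u - 1) ×ˢ Finset.Icc (p + u) (p + u + v - 1) := by
    ext ⟨a, b⟩
    simp only [Finset.mem_filter, Finset.mem_product, Finset.mem_Icc, hσ, blockSwapFun]
    split_ifs <;> omega
  rw [hset, Finset.card_product, Nat.card_Icc, Nat.card_Icc]
  have h1 : p + u - 1 + 1 - p = u := by omega
  have h2 : p + u + v - 1 + 1 - (p + u) = v := by omega
  rw [h1, h2]

def stmtS (n : ℕ → ℕ) (j : ℕ) : ℕ := ∑ k ∈ Finset.Icc 1 j, n k

lemma stmtS_succ (n : ℕ → ℕ) (j : ℕ) : stmtS n (j + 1) = stmtS n j + n (j + 1) := by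
  unfold stmtS
  rw [Finset.sum_Icc_succ_top (by omega)]

lemma stmtS_mono (n : ℕ → ℕ) : Monotone (stmtS n) := by
  intro a b hab
  exact Finset.sum_le_sum_of_subset (Finset.Icc_subset_Icc_right hab)

lemma stmtS_split (n : ℕ → ℕ) (m r : ℕ) (h : m ≤ r) :
    stmtS n m + ∑ k ∈ Finset.Icc (m + 1) r, n k = stmtS n r := by
  unfold stmtS
  have := Finset.sum_Ioc_consecutive n (Nat.zero_le m) h
  simpa [← Finset.Icc_add_one_left_eq_Ioc] using this

/-- `{1,…,2N} = I₁ ∪ ⋯ ∪ I_r ∪ J_r ∪ ⋯ ∪ J₁`, consecutive intervals with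
`|I_k| = |J_k| = n k`; `β` is the block permutation rearranging `(I₁,…,I_r,J_r,…,J₁)` into
`(I₁,J₁,I₂,…,I_r,J_r,…,J₂)`; `β_i` (resp. `β'_j`) exchanges the adjacent blocks of lengths
`n (i+1)` and `n 1` starting at position `N + n (i+2) + ⋯ + n r + 1` (resp. at position
`n 1 + ⋯ + n j + 1`).  Then `β = β'_1 ∘ ⋯ ∘ β'_{r−1} ∘ β_{r−1} ∘ ⋯ ∘ β_1`, the lengths are
additive in this factorization, `ℓ(β_i) = ℓ(β'_i) = n 1 · n (i+1)`, and
`ℓ(β) = 2 · n 1 · (n 2 + ⋯ + n r)`. -/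
theorem stmt_10 (r : ℕ) (hr : 2 ≤ r) (n : ℕ → ℕ)
    (hn : ∀ k, 1 ≤ k → k ≤ r → 0 < n k)
    (N : ℕ) (hN : N = ∑ k ∈ Finset.Icc 1 r, n k)
    (β : Equiv.Perm ℕ)
    (hβ : ∀ x : ℕ, β x =
      if x = 0 then 0
      else if x ≤ n 1 then x
      else if x ≤ 2 * N - n 1 then x + n 1
      else if x ≤ 2 * N then x - (2 * N - 2 * n 1)
      else x)
    (bi bj : ℕ → Equiv.Perm ℕ)
    (hbi : ∀ i, 1 ≤ i → i ≤ r - 1 → ∀ x : ℕ,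
      bi i x = blockSwapFun (N + (∑ k ∈ Finset.Icc (i + 2) r, n k) + 1) (n (i + 1)) (n 1) x)
    (hbj : ∀ j, 1 ≤ j → j ≤ r - 1 → ∀ x : ℕ,
      bj j x = blockSwapFun ((∑ k ∈ Finset.Icc 1 j, n k) + 1) (n (j + 1)) (n 1) x) :
    β = compSeq bj 1 (r - 1) * compSeqRev bi 1 (r - 1) ∧
    inversions (2 * N) β =
      (∑ j ∈ Finset.Icc 1 (r - 1), inversions (2 * N) (bj j)) +
        ∑ i ∈ Finset.Icc 1 (r - 1), inversions (2 * N) (bi i) ∧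
    (∀ i, 1 ≤ i → i ≤ r - 1 →
      inversions (2 * N) (bi i) = n 1 * n (i + 1) ∧
        inversions (2 * N) (bj i) = n 1 * n (i + 1)) ∧
    inversions (2 * N) β = 2 * n 1 * ∑ k ∈ Finset.Icc 2 r, n k := by
  have hn1 : 1 ≤ n 1 := hn 1 le_rfl (by omega)
  have hS1 : stmtS n 1 = n 1 := by unfold stmtS; simp
  have hNS : stmtS n r = N := hN.symm
  have hn1N : n 1 ≤ N := by
    have := stmtS_mono n (show 1 ≤ r by omega)
    omega
  have hsplit : ∀ m, m ≤ r → stmtS n m + ∑ k ∈ Finset.Icc (m + 1) r, n k = N := by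
    intro m h
    rw [stmtS_split n m r h, hNS]
  have hbi' : ∀ i, 1 ≤ i → i ≤ r - 1 → ∀ x,
      bi i x = blockSwapFun (2 * N - stmtS n (i + 1) + 1) (n (i + 1)) (n 1) x := by
    intro i h1 h2 x
    rw [hbi i h1 h2 x]
    have h3 := hsplit (i + 1) (by omega)
    rw [show (i + 1) + 1 = i + 2 from rfl] at h3
    have hm : stmtS n (i + 1) ≤ N := by omega
    rw [show N + (∑ k ∈ Finset.Icc (i + 2) r, n k) + 1 = 2 * N - stmtS n (i + 1) + 1 from by omega]
  have hbj' : ∀ j, 1 ≤ j → j ≤ r - 1 → ∀ x,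
      bj j x = blockSwapFun (stmtS n j + 1) (n (j + 1)) (n 1) x := by
    intro j h1 h2 x
    rw [hbj j h1 h2 x]
    rfl
  -- key1 : effect of the bi-chain
  have key1 : ∀ i, i ≤ r - 1 → ∀ x, (compSeqRev bi 1 i) x =
      if 2 * N - n 1 < x ∧ x ≤ 2 * N then x - (stmtS n (i + 1) - n 1)
      else if 2 * N - stmtS n (i + 1) < x ∧ x ≤ 2 * N - n 1 then x + n 1
      else x := by
    intro i
    induction i with
    | zero =>
      intro _ x
      rw [compSeqRev_zero, Equiv.Perm.one_apply]
      rw [show (0 : ℕ) + 1 = 1 from rfl, hS1]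
      split_ifs <;> omega
    | succ i ih =>
      intro hle x
      rw [compSeqRev_succ, Equiv.Perm.mul_apply, ih (by omega) x,
        show 1 + i = i + 1 from Nat.add_comm 1 i,
        hbi' (i + 1) (by omega) (by omega)]
      have hstep := stmtS_succ n (i + 1)
      have hb1 : stmtS n (i + 1) ≤ N := by
        have := stmtS_mono n (show i + 1 ≤ r by omega); omega
      have hb2 : stmtS n (i + 1 + 1) ≤ N := by
        have := stmtS_mono n (show i + 1 + 1 ≤ r by omega); omega
      have hb3 : n 1 ≤ stmtS n (i + 1) := by
        have := stmtS_mono n (show 1 ≤ i + 1 by omega); omega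
      simp only [blockSwapFun]
      split_ifs <;> omega
  -- key2 : effect of the bj-chain after the full bi-chain
  have key2 : ∀ d, d ≤ r - 1 → ∀ x,
      (compSeq bj (r - d) d) ((compSeqRev bi 1 (r - 1)) x) =
      if 2 * N - n 1 < x ∧ x ≤ 2 * N then x + n 1 + stmtS n (r - d) - 2 * N
      else if stmtS n (r - d) < x ∧ x ≤ 2 * N - n 1 then x + n 1
      else x := by
    intro d
    induction d with
    | zero =>
      intro _ x
      rw [show r - 0 = r from rfl, compSeq_zero, Equiv.Perm.one_apply, key1 (r - 1) le_rfl x]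
      rw [show r - 1 + 1 = r from by omega, hNS]
      split_ifs <;> omega
    | succ d ih =>
      intro hle x
      have hj1 : 1 ≤ r - (d + 1) := by omega
      have hj2 : r - (d + 1) ≤ r - 1 := by omega
      rw [compSeq_succ, show r - (d + 1) + 1 = r - d from by omega, Equiv.Perm.mul_apply,
        ih (by omega) x, hbj' (r - (d + 1)) hj1 hj2]
      have hstep : stmtS n (r - d) = stmtS n (r - (d + 1)) + n (r - (d + 1) + 1) := by
        rw [show r - d = r - (d + 1) + 1 from by omega]
        exact stmtS_succ n (r - (d + 1))
      have hb1 : stmtS n (r - d) ≤ N := by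
        have := stmtS_mono n (show r - d ≤ r by omega); omega
      have hb3 : n 1 ≤ stmtS n (r - (d + 1)) := by
        have := stmtS_mono n hj1; omega
      simp only [blockSwapFun]
      split_ifs <;> omega
  -- Conjunct 1
  have hbeta : ∀ x, β x = (compSeq bj 1 (r - 1) * compSeqRev bi 1 (r - 1)) x := by
    intro x
    rw [Equiv.Perm.mul_apply]
    have h := key2 (r - 1) le_rfl x
    rw [show r - (r - 1) = 1 from by omega] at h
    rw [h, hβ x, hS1]
    split_ifs <;> omega
  -- Conjunct 3
  have part3 : ∀ i, 1 ≤ i → i ≤ r - 1 →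
      inversions (2 * N) (bi i) = n 1 * n (i + 1) ∧
        inversions (2 * N) (bj i) = n 1 * n (i + 1) := by
    intro i h1 h2
    have hstep := stmtS_succ n i
    have hb1 : stmtS n (i + 1) ≤ N := by
      have := stmtS_mono n (show i + 1 ≤ r by omega); omega
    have hb3 : n 1 ≤ stmtS n i := by
      have := stmtS_mono n h1; omega
    constructor
    · exact (inversions_blockSwap (2 * N) _ _ _ (bi i) (hbi' i h1 h2) (by omega)
        (by omega)).trans (Nat.mul_comm _ _)
    · exact (inversions_blockSwap (2 * N) _ _ _ (bj i) (hbj' i h1 h2) (by omega)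
        (by omega)).trans (Nat.mul_comm _ _)
  -- sum over Icc 2 r
  have hsum2 : n 1 + ∑ k ∈ Finset.Icc 2 r, n k = N := by
    have h1 := hsplit 1 (by omega)
    rw [show (1 : ℕ) + 1 = 2 from rfl, hS1] at h1
    exact h1
  -- Conjunct 4
  have hinv : inversions (2 * N) β = 2 * n 1 * ∑ k ∈ Finset.Icc 2 r, n k := by
    unfold inversions
    have hset : ((Finset.Icc 1 (2 * N) ×ˢ Finset.Icc 1 (2 * N)).filter
        fun q => q.1 < q.2 ∧ β q.2 < β q.1)
        = Finset.Ioc (n 1) (2 * N - n 1) ×ˢ Finset.Ioc (2 * N - n 1) (2 * N) := by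
      ext ⟨a, b⟩
      simp only [Finset.mem_filter, Finset.mem_product, Finset.mem_Icc, Finset.mem_Ioc, hβ]
      split_ifs <;> omega
    rw [hset, Finset.card_product, Nat.card_Ioc, Nat.card_Ioc]
    have e1 : 2 * N - n 1 - n 1 = 2 * (N - n 1) := by omega
    have e2 : 2 * N - (2 * N - n 1) = n 1 := by omega
    have e3 : (∑ k ∈ Finset.Icc 2 r, n k) = N - n 1 := by omega
    rw [e1, e2, e3]
    ring
  -- reindexing
  have hre : (∑ k ∈ Finset.Icc 2 r, n k) = ∑ j ∈ Finset.Icc 1 (r - 1), n (j + 1) := by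
    have e : Finset.Icc 2 r = (Finset.Icc 1 (r - 1)).map (addRightEmbedding 1) := by
      rw [Finset.map_add_right_Icc]
      congr 1
      omega
    rw [e, Finset.sum_map]
    rfl
  have hsums : ∀ g : ℕ → Equiv.Perm ℕ,
      (∀ i, 1 ≤ i → i ≤ r - 1 → inversions (2 * N) (g i) = n 1 * n (i + 1)) →
      ∑ j ∈ Finset.Icc 1 (r - 1), inversions (2 * N) (g j)
        = n 1 * ∑ k ∈ Finset.Icc 2 r, n k := by
    intro g hg
    rw [hre, Finset.mul_sum]
    refine Finset.sum_congr rfl ?_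
    intro j hj
    rw [Finset.mem_Icc] at hj
    exact hg j hj.1 hj.2
  refine ⟨Equiv.ext hbeta, ?_, part3, hinv⟩
  rw [hinv, hsums bj (fun i h1 h2 => (part3 i h1 h2).2), hsums bi (fun i h1 h2 => (part3 i h1 h2).1)]
  ring
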